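/- Let (Ω, A, P) be a probability space and let F_1, F_2, G_1, G_2 be sub-σ-algebras such that the σ-algebra σ(F_1, F_2) is independent of σ(G_1, G_2). Then the β-mixing coefficient satisfies β(σ(F_1, G_1), σ(F_2, G_2)) ≤ β(F_1, F_2) + β(G_1, G_2), where β(A, B) = (1/2) sup Σ_{i,j} |P(A_i ∩ B_j) − P(A_i) P(B_j)|, the supremum taken over all finite partitions {A_i} ⊂ A and {B_j} ⊂ B of Ω. -/

import Mathlib

/-!
Approximate each cell of a partition of `F₁ ⊔ G₁` (resp. `F₂ ⊔ G₂`) by a union of rectangles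
`A ∩ B`, where `A` and `B` run through finite partitions in `F₁` and `G₁` (resp. `F₂` and `G₂`).
The approximation changes `Σ |P(C ∩ D) - P(C) P(D)|` arbitrarily little, and coarsening a partition
can only decrease this sum, so it suffices to bound it for the rectangle partitions themselves.
There, independence of `F₁ ⊔ F₂` and `G₁ ⊔ G₂` gives the exact identity
`cov(A ∩ B, A' ∩ B') = cov(A, A') P(B ∩ B') + P(A) P(A') cov(B, B')`, and summing over all cells
splits the sum into the one for `(F₁, F₂)` plus the one for `(G₁, G₂)`.
-/

open MeasureTheory

/-- The β-mixing (absolute regularity) coefficient between two sub-σ-algebras `𝓐` and `𝓑`: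
`β(𝓐,𝓑) = (1/2) sup Σ_{i,j} |P(A_i ∩ B_j) − P(A_i)P(B_j)|`, supremum over finite
measurable partitions of `Ω`. -/
noncomputable def betaMix {Ω : Type*} [MeasurableSpace Ω] (μ : Measure Ω)
    (𝓐 𝓑 : MeasurableSpace Ω) : ℝ :=
  sSup {x : ℝ | ∃ (n m : ℕ) (A : Fin n → Set Ω) (B : Fin m → Set Ω),
    (∀ i, MeasurableSet[𝓐] (A i)) ∧ (∀ j, MeasurableSet[𝓑] (B j)) ∧
    Pairwise (Function.onFun Disjoint A) ∧ Pairwise (Function.onFun Disjoint B) ∧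
    (⋃ i, A i) = Set.univ ∧ (⋃ j, B j) = Set.univ ∧
    x = (1 / 2) * ∑ i, ∑ j,
      |(μ (A i ∩ B j)).toReal - (μ (A i)).toReal * (μ (B j)).toReal|}

open Set Function ProbabilityTheory
open scoped symmDiff

namespace BetaMixing

variable {Ω : Type*} {m0 : MeasurableSpace Ω} {μ : Measure Ω} {ι κ : Type*}

structure IsMeasurablePartition (m : MeasurableSpace Ω) (A : ι → Set Ω) : Prop where
  measurableSet : ∀ i, MeasurableSet[m] (A i)
  pairwise_disjoint : Pairwise (Disjoint on A)
  iUnion_eq : ⋃ i, A i = univ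

namespace IsMeasurablePartition

variable {m m' : MeasurableSpace Ω} {A : ι → Set Ω} {B : κ → Set Ω}

lemma mono (hA : IsMeasurablePartition m A) (h : m ≤ m') : IsMeasurablePartition m' A :=
  ⟨fun i => h _ (hA.measurableSet i), hA.pairwise_disjoint, hA.iUnion_eq⟩

lemma comp_equiv {ι' : Type*} (hA : IsMeasurablePartition m A) (e : ι' ≃ ι) :
    IsMeasurablePartition m (A ∘ e) :=
  ⟨fun i => hA.measurableSet (e i), hA.pairwise_disjoint.comp_of_injective e.injective,
    (e.surjective.iUnion_comp A).trans hA.iUnion_eq⟩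

lemma inter (hA : IsMeasurablePartition m A) (hB : IsMeasurablePartition m B) :
    IsMeasurablePartition m (fun p : ι × κ => A p.1 ∩ B p.2) where
  measurableSet p := (hA.measurableSet p.1).inter (hB.measurableSet p.2)
  pairwise_disjoint := by
    rintro ⟨i, j⟩ ⟨i', j'⟩ hne
    rcases ne_or_eq i i' with hi | rfl
    · exact (hA.pairwise_disjoint hi).mono inter_subset_left inter_subset_left
    · exact (hB.pairwise_disjoint (by simpa using hne)).mono inter_subset_right inter_subset_right
  iUnion_eq := by rw [iUnion_prod', ← iUnion_inter_iUnion, hA.iUnion_eq, hB.iUnion_eq, univ_inter]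

variable [IsProbabilityMeasure μ] [Fintype ι] [Fintype κ]

lemma sum_measureReal (hA : IsMeasurablePartition m0 A) : ∑ i, μ.real (A i) = 1 := by
  rw [← measureReal_iUnion_fintype hA.pairwise_disjoint hA.measurableSet, hA.iUnion_eq,
    probReal_univ]

lemma sum_sum_measureReal_inter (hA : IsMeasurablePartition m0 A)
    (hB : IsMeasurablePartition m0 B) : ∑ i, ∑ j, μ.real (A i ∩ B j) = 1 := by
  rw [← (hA.inter hB).sum_measureReal (μ := μ), Fintype.sum_prod_type]

lemma sum_sum_measureReal_mul (hA : IsMeasurablePartition m0 A)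
    (hB : IsMeasurablePartition m0 B) : ∑ i, ∑ j, μ.real (A i) * μ.real (B j) = 1 := by
  rw [← Finset.sum_mul_sum, hA.sum_measureReal, hB.sum_measureReal, one_mul]

end IsMeasurablePartition

lemma isMeasurablePartition_preimage_singleton {m : MeasurableSpace Ω} {I : Type*}
    [MeasurableSpace I] [MeasurableSingletonClass I] {f : Ω → I} (hf : Measurable[m] f) :
    IsMeasurablePartition m (fun i => f ⁻¹' {i}) where
  measurableSet i := hf (measurableSet_singleton i)
  pairwise_disjoint _ _ h := (disjoint_singleton.2 h).preimage f
  iUnion_eq := by rw [← preimage_iUnion, iUnion_of_singleton, preimage_univ]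

noncomputable def setCov (μ : Measure Ω) (s t : Set Ω) : ℝ :=
  μ.real (s ∩ t) - μ.real s * μ.real t

section betaSum

variable [Fintype ι] [Fintype κ]

noncomputable def betaSum (μ : Measure Ω) (A : ι → Set Ω) (B : κ → Set Ω) : ℝ :=
  ∑ i, ∑ j, |setCov μ (A i) (B j)|

lemma betaSum_comp_equiv {ι' κ' : Type*} [Fintype ι'] [Fintype κ'] (A : ι → Set Ω)
    (B : κ → Set Ω) (e : ι' ≃ ι) (e' : κ' ≃ κ) :
    betaSum μ (A ∘ e) (B ∘ e') = betaSum μ A B := by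
  simp only [betaSum, comp_apply]
  rw [← e.sum_comp]
  exact Finset.sum_congr rfl fun i _ => e'.sum_comp fun j => |setCov μ (A (e i)) (B j)|

lemma betaSum_le_two [IsProbabilityMeasure μ] {A : ι → Set Ω} {B : κ → Set Ω}
    (hA : IsMeasurablePartition m0 A) (hB : IsMeasurablePartition m0 B) : betaSum μ A B ≤ 2 :=
  calc betaSum μ A B
      ≤ ∑ i, ∑ j, (μ.real (A i ∩ B j) + μ.real (A i) * μ.real (B j)) := by
        unfold betaSum setCov
        gcongr with i _ j _
        exact (abs_sub _ _).trans_eq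
          (by rw [abs_of_nonneg measureReal_nonneg, abs_of_nonneg (by positivity)])
    _ = 2 := by
        simp only [Finset.sum_add_distrib, hA.sum_sum_measureReal_inter hB,
          hA.sum_sum_measureReal_mul hB]
        norm_num

end betaSum

section betaMix

variable {𝓐 𝓑 : MeasurableSpace Ω}

lemma betaMix_le {c : ℝ} (h : ∀ (n m : ℕ) (A : Fin n → Set Ω) (B : Fin m → Set Ω),
      IsMeasurablePartition 𝓐 A → IsMeasurablePartition 𝓑 B → betaSum μ A B ≤ 2 * c) :
    @betaMix Ω m0 μ 𝓐 𝓑 ≤ c := by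
  refine csSup_le ⟨_, 1, 1, fun _ => univ, fun _ => univ, fun _ => @MeasurableSet.univ Ω 𝓐,
    fun _ => @MeasurableSet.univ Ω 𝓑,
    Subsingleton.pairwise, Subsingleton.pairwise, iUnion_const _, iUnion_const _, rfl⟩ ?_
  rintro _ ⟨n, m, A, B, hA, hB, hdA, hdB, huA, huB, rfl⟩
  have := h n m A B ⟨hA, hdA, huA⟩ ⟨hB, hdB, huB⟩
  unfold betaSum setCov Measure.real at this
  linarith

lemma betaSum_le_two_mul_betaMix [IsProbabilityMeasure μ] [Fintype ι] [Fintype κ]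
    (h𝓐 : 𝓐 ≤ m0) (h𝓑 : 𝓑 ≤ m0) {A : ι → Set Ω} {B : κ → Set Ω}
    (hA : IsMeasurablePartition 𝓐 A) (hB : IsMeasurablePartition 𝓑 B) :
    betaSum μ A B ≤ 2 * @betaMix Ω m0 μ 𝓐 𝓑 := by
  have hA' := hA.comp_equiv (Fintype.equivFin ι).symm
  have hB' := hB.comp_equiv (Fintype.equivFin κ).symm
  unfold betaMix
  rw [← div_le_iff₀' two_pos]
  refine le_csSup_of_le ?_ ⟨_, _, _, _, hA'.1, hB'.1, hA'.2, hB'.2, hA'.3, hB'.3, rfl⟩ ?_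
  · refine ⟨1, ?_⟩
    rintro _ ⟨n, m, A, B, hA, hB, hdA, hdB, huA, huB, rfl⟩
    have := betaSum_le_two (μ := μ) (IsMeasurablePartition.mono ⟨hA, hdA, huA⟩ h𝓐)
      (IsMeasurablePartition.mono ⟨hB, hdB, huB⟩ h𝓑)
    unfold betaSum setCov Measure.real at this
    linarith
  · rw [← betaSum_comp_equiv A B (Fintype.equivFin ι).symm (Fintype.equivFin κ).symm]
    unfold betaSum setCov Measure.real
    rw [div_eq_mul_one_div, mul_comm]

end betaMix

lemma abs_setCov_sub_setCov_le [IsProbabilityMeasure μ] {s t s' t' : Set Ω}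
    (hs : MeasurableSet s) (ht : MeasurableSet t) (hs' : MeasurableSet s')
    (ht' : MeasurableSet t') :
    |setCov μ s t - setCov μ s' t'| ≤ 2 * (μ.real (s ∆ s') + μ.real (t ∆ t')) := by
  have hss' := abs_measureReal_sub_le_measureReal_symmDiff (μ := μ) hs.nullMeasurableSet
    hs'.nullMeasurableSet
  have htt' := abs_measureReal_sub_le_measureReal_symmDiff (μ := μ) ht.nullMeasurableSet
    ht'.nullMeasurableSet
  have hinter : |μ.real (s ∩ t) - μ.real (s' ∩ t')| ≤ μ.real (s ∆ s') + μ.real (t ∆ t') := by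
    refine (abs_measureReal_sub_le_measureReal_symmDiff (hs.inter ht).nullMeasurableSet
      (hs'.inter ht').nullMeasurableSet).trans ((measureReal_mono ?_).trans
      (measureReal_union_le _ _))
    intro x
    simp only [mem_symmDiff, mem_inter_iff, mem_union]
    tauto
  have hmul : |μ.real s * μ.real t - μ.real s' * μ.real t'|
      ≤ μ.real (s ∆ s') + μ.real (t ∆ t') := by
    rw [show μ.real s * μ.real t - μ.real s' * μ.real t'
        = (μ.real s - μ.real s') * μ.real t + μ.real s' * (μ.real t - μ.real t') by ring]
    refine (abs_add_le _ _).trans ?_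
    rw [abs_mul, abs_mul, abs_of_nonneg measureReal_nonneg, abs_of_nonneg measureReal_nonneg]
    calc |μ.real s - μ.real s'| * μ.real t + μ.real s' * |μ.real t - μ.real t'|
        ≤ |μ.real s - μ.real s'| * 1 + 1 * |μ.real t - μ.real t'| := by
          gcongr <;> exact measureReal_le_one
      _ ≤ μ.real (s ∆ s') + μ.real (t ∆ t') := by linarith
  unfold setCov
  rw [sub_sub_sub_comm]
  exact (abs_sub _ _).trans (by linarith)

lemma betaSum_le_add_of_symmDiff_le [IsProbabilityMeasure μ] [Fintype ι] [Fintype κ]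
    {C U : ι → Set Ω} {D V : κ → Set Ω} (hC : ∀ k, MeasurableSet (C k))
    (hD : ∀ l, MeasurableSet (D l)) (hU : ∀ k, MeasurableSet (U k))
    (hV : ∀ l, MeasurableSet (V l)) {δ : ℝ} (hCU : ∀ k, μ.real (C k ∆ U k) ≤ δ)
    (hDV : ∀ l, μ.real (D l ∆ V l) ≤ δ) :
    betaSum μ C D ≤ betaSum μ U V + 4 * Fintype.card ι * Fintype.card κ * δ := by
  have hterm (k : ι) (l : κ) : |setCov μ (C k) (D l)| ≤ |setCov μ (U k) (V l)| + 4 * δ := by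
    have := abs_setCov_sub_setCov_le (μ := μ) (hC k) (hD l) (hU k) (hV l)
    have := abs_sub_abs_le_abs_sub (setCov μ (C k) (D l)) (setCov μ (U k) (V l))
    linarith [hCU k, hDV l]
  calc betaSum μ C D ≤ ∑ k, ∑ l, (|setCov μ (U k) (V l)| + 4 * δ) := by
        unfold betaSum
        gcongr with k _ l _
        exact hterm k l
    _ = betaSum μ U V + 4 * Fintype.card ι * Fintype.card κ * δ := by
        simp only [Finset.sum_add_distrib, Finset.sum_const, Finset.card_univ, nsmul_eq_mul,
          betaSum]
        ring

lemma sum_sum_le_sum_of_pairwise_disjoint {M : Type*} [AddCommMonoid M] [Preorder M]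
    [AddLeftMono M] [Fintype ι] {I : Type*} [Fintype I] {S : ι → Finset I}
    (hS : Pairwise (Disjoint on S)) {φ : I → M} (hφ : ∀ i, 0 ≤ φ i) :
    ∑ k, ∑ i ∈ S k, φ i ≤ ∑ i, φ i := by
  classical
  rw [← Finset.sum_biUnion fun k _ l _ h => hS h]
  exact Finset.sum_le_univ_sum_of_nonneg hφ

section refinement

variable {I J : Type*} [MeasurableSpace I] [MeasurableSingletonClass I] [MeasurableSpace J]
  [MeasurableSingletonClass J] [IsFiniteMeasure μ]

lemma measureReal_preimage_inter_eq_sum {f : Ω → I} (hf : Measurable f) (s : Finset I)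
    (B : Set Ω) : μ.real (f ⁻¹' s ∩ B) = ∑ i ∈ s, μ.real (f ⁻¹' {i} ∩ B) := by
  rw [← measureReal_restrict_apply (hf s.measurableSet),
    ← sum_measureReal_preimage_singleton s fun i _ => hf (measurableSet_singleton i)]
  exact Finset.sum_congr rfl fun i _ => measureReal_restrict_apply (hf (measurableSet_singleton i))

lemma setCov_preimage_eq_sum {f : Ω → I} {g : Ω → J} (hf : Measurable f) (hg : Measurable g)
    (s : Finset I) (t : Finset J) :
    setCov μ (f ⁻¹' s) (g ⁻¹' t) = ∑ i ∈ s, ∑ j ∈ t, setCov μ (f ⁻¹' {i}) (g ⁻¹' {j}) := by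
  have hinter : μ.real (f ⁻¹' s ∩ g ⁻¹' t)
      = ∑ i ∈ s, ∑ j ∈ t, μ.real (f ⁻¹' {i} ∩ g ⁻¹' {j}) := by
    rw [measureReal_preimage_inter_eq_sum hf]
    refine Finset.sum_congr rfl fun i _ => ?_
    simp only [inter_comm (f ⁻¹' {i}), measureReal_preimage_inter_eq_sum hg]
  unfold setCov
  rw [hinter, ← inter_univ (f ⁻¹' s), ← inter_univ (g ⁻¹' t),
    measureReal_preimage_inter_eq_sum hf, measureReal_preimage_inter_eq_sum hg,
    Finset.sum_mul_sum]
  simp only [inter_univ, ← Finset.sum_sub_distrib]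

lemma betaSum_preimage_le [Fintype ι] [Fintype κ] [Fintype I] [Fintype J] {f : Ω → I}
    {g : Ω → J} (hf : Measurable f) (hg : Measurable g) {S : ι → Finset I}
    {T : κ → Finset J} (hS : Pairwise (Disjoint on S)) (hT : Pairwise (Disjoint on T)) :
    betaSum μ (fun k => f ⁻¹' S k) (fun l => g ⁻¹' T l)
      ≤ betaSum μ (fun i => f ⁻¹' {i}) (fun j => g ⁻¹' {j}) := by
  set c : I → J → ℝ := fun i j => |setCov μ (f ⁻¹' {i}) (g ⁻¹' {j})|
  calc betaSum μ (fun k => f ⁻¹' S k) (fun l => g ⁻¹' T l)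
      ≤ ∑ k, ∑ l, ∑ i ∈ S k, ∑ j ∈ T l, c i j := by
        unfold betaSum
        gcongr with k _ l _
        rw [setCov_preimage_eq_sum hf hg]
        exact (Finset.abs_sum_le_sum_abs _ _).trans
          (Finset.sum_le_sum fun i _ => Finset.abs_sum_le_sum_abs _ _)
    _ = ∑ k, ∑ i ∈ S k, ∑ l, ∑ j ∈ T l, c i j :=
        Finset.sum_congr rfl fun k _ => Finset.sum_comm
    _ ≤ ∑ k, ∑ i ∈ S k, ∑ j, c i j := by
        gcongr with k _ i _
        exact sum_sum_le_sum_of_pairwise_disjoint hT fun j => abs_nonneg _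
    _ ≤ betaSum μ (fun i => f ⁻¹' {i}) (fun j => g ⁻¹' {j}) :=
        sum_sum_le_sum_of_pairwise_disjoint hS fun i =>
          Finset.sum_nonneg fun j _ => abs_nonneg _

end refinement

section independence

variable {𝓕 𝓖 : MeasurableSpace Ω}

lemma setCov_inter_inter_of_indep (hind : Indep 𝓕 𝓖 μ) {s s' t t' : Set Ω}
    (hs : MeasurableSet[𝓕] s) (hs' : MeasurableSet[𝓕] s') (ht : MeasurableSet[𝓖] t)
    (ht' : MeasurableSet[𝓖] t') :
    setCov μ (s ∩ t) (s' ∩ t')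
      = setCov μ s s' * μ.real (t ∩ t') + μ.real s * μ.real s' * setCov μ t t' := by
  have hmul {u v : Set Ω} (hu : MeasurableSet[𝓕] u) (hv : MeasurableSet[𝓖] v) :
      μ.real (u ∩ v) = μ.real u * μ.real v := by
    simp only [measureReal_def, (Indep_iff _ _ _).1 hind u v hu hv, ENNReal.toReal_mul]
  unfold setCov
  rw [inter_inter_inter_comm, hmul (hs.inter hs') (ht.inter ht'), hmul hs ht, hmul hs' ht']
  ring

lemma sum_prod_sum_prod_mul {ι' κ' : Type*} [Fintype ι] [Fintype κ] [Fintype ι'] [Fintype κ']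
    (F : ι → ι' → ℝ) (G : κ → κ' → ℝ) :
    ∑ p : ι × κ, ∑ q : ι' × κ', F p.1 q.1 * G p.2 q.2
      = (∑ i, ∑ i', F i i') * ∑ j, ∑ j', G j j' := by
  simp only [Fintype.sum_prod_type, Finset.sum_mul_sum]

lemma betaSum_inter_le_of_indep [IsProbabilityMeasure μ] {ι' κ' : Type*} [Fintype ι]
    [Fintype κ] [Fintype ι'] [Fintype κ'] (h𝓕 : 𝓕 ≤ m0) (h𝓖 : 𝓖 ≤ m0) (hind : Indep 𝓕 𝓖 μ)
    {A : ι → Set Ω} {A' : ι' → Set Ω} {B : κ → Set Ω} {B' : κ' → Set Ω}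
    (hA : IsMeasurablePartition 𝓕 A) (hA' : IsMeasurablePartition 𝓕 A')
    (hB : IsMeasurablePartition 𝓖 B) (hB' : IsMeasurablePartition 𝓖 B') :
    betaSum μ (fun p : ι × κ => A p.1 ∩ B p.2) (fun q : ι' × κ' => A' q.1 ∩ B' q.2)
      ≤ betaSum μ A A' + betaSum μ B B' :=
  calc betaSum μ (fun p : ι × κ => A p.1 ∩ B p.2) (fun q : ι' × κ' => A' q.1 ∩ B' q.2)
      ≤ ∑ p : ι × κ, ∑ q : ι' × κ', (|setCov μ (A p.1) (A' q.1)| * μ.real (B p.2 ∩ B' q.2)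
          + μ.real (A p.1) * μ.real (A' q.1) * |setCov μ (B p.2) (B' q.2)|) := by
        unfold betaSum
        gcongr with p _ q _
        rw [setCov_inter_inter_of_indep hind (hA.measurableSet _) (hA'.measurableSet _)
          (hB.measurableSet _) (hB'.measurableSet _)]
        refine (abs_add_le _ _).trans_eq ?_
        rw [abs_mul, abs_mul, abs_of_nonneg measureReal_nonneg,
          abs_of_nonneg (by positivity : 0 ≤ μ.real (A p.1) * μ.real (A' q.1))]
    _ = betaSum μ A A' * ∑ j, ∑ j', μ.real (B j ∩ B' j')
          + (∑ i, ∑ i', μ.real (A i) * μ.real (A' i')) * betaSum μ B B' := by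
        simp only [Finset.sum_add_distrib]
        rw [sum_prod_sum_prod_mul (fun i i' => |setCov μ (A i) (A' i')|)
            fun j j' => μ.real (B j ∩ B' j'),
          sum_prod_sum_prod_mul (fun i i' => μ.real (A i) * μ.real (A' i'))
            fun j j' => |setCov μ (B j) (B' j')|]
        rfl
    _ = betaSum μ A A' + betaSum μ B B' := by
        rw [(hB.mono h𝓖).sum_sum_measureReal_inter (hB'.mono h𝓖),
          (hA.mono h𝓕).sum_sum_measureReal_mul (hA'.mono h𝓕), mul_one, one_mul]

end independence

section approximation

open MeasurableSpace (generateFrom generateFrom_le generateFrom_mono measurableSet_generateFrom)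

lemma symmDiff_subset_iUnion_symmDiff {C T U : ι → Set Ω} (hC : Pairwise (Disjoint on C))
    (hUT : ∀ k, U k ⊆ T k) (hTU : ⋃ k, T k ⊆ ⋃ k, U k) (k : ι) :
    C k ∆ U k ⊆ ⋃ j, C j ∆ T j := by
  rintro x (⟨hxC, hxU⟩ | ⟨hxU, hxC⟩)
  · by_cases hxT : x ∈ T k
    · obtain ⟨j, hj⟩ := mem_iUnion.1 (hTU (mem_iUnion.2 ⟨k, hxT⟩))
      have hjk : j ≠ k := by rintro rfl; exact hxU hj
      exact mem_iUnion.2 ⟨j, Or.inr ⟨hUT j hj, fun hxC' => disjoint_left.1 (hC hjk) hxC' hxC⟩⟩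
    · exact mem_iUnion.2 ⟨k, Or.inl ⟨hxC, hxT⟩⟩
  · exact mem_iUnion.2 ⟨k, Or.inr ⟨hUT k hxU, hxC⟩⟩

open scoped Classical in
/-- The atoms of the finite family `a` are the fibres of `signature a`. -/
noncomputable def signature (a : Finset (Set Ω)) (x : Ω) : a → Bool :=
  fun t => decide (x ∈ (t : Set Ω))

lemma measurable_signature {m : MeasurableSpace Ω} {a : Finset (Set Ω)}
    (ha : ∀ t ∈ a, MeasurableSet[m] t) : Measurable[m] (signature a) :=
  measurable_pi_iff.2 fun t => measurable_to_bool (by simpa [signature, preimage] using ha t t.2)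

noncomputable def rectSignature (a b : Finset (Set Ω)) (x : Ω) : (a → Bool) × (b → Bool) :=
  (signature a x, signature b x)

lemma measurable_rectSignature {m : MeasurableSpace Ω} {a b : Finset (Set Ω)}
    (ha : ∀ t ∈ a, MeasurableSet[m] t) (hb : ∀ t ∈ b, MeasurableSet[m] t) :
    Measurable[m] (rectSignature a b) :=
  (measurable_signature ha).prodMk (measurable_signature hb)

lemma rectSignature_preimage_singleton (a b : Finset (Set Ω)) (p : (a → Bool) × (b → Bool)) :
    rectSignature a b ⁻¹' {p} = signature a ⁻¹' {p.1} ∩ signature b ⁻¹' {p.2} := by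
  ext x
  simp [rectSignature, Prod.ext_iff]

lemma generateFrom_le_comap_rectSignature (a b : Finset (Set Ω)) :
    generateFrom (↑a ∪ ↑b) ≤ MeasurableSpace.comap (rectSignature a b) ⊤ := by
  refine generateFrom_le ?_
  rintro t (ht | ht)
  · exact ⟨{p | p.1 ⟨t, ht⟩ = true}, trivial, by ext; simp [rectSignature, signature]⟩
  · exact ⟨{p | p.2 ⟨t, ht⟩ = true}, trivial, by ext; simp [rectSignature, signature]⟩

def finGenSets (M N : MeasurableSpace Ω) : Set (Set Ω) :=
  {s | ∃ a b : Finset (Set Ω), (∀ t ∈ a, MeasurableSet[M] t) ∧ (∀ t ∈ b, MeasurableSet[N] t) ∧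
    MeasurableSet[generateFrom (↑a ∪ ↑b)] s}

lemma isSetAlgebra_finGenSets (M N : MeasurableSpace Ω) : IsSetAlgebra (finGenSets M N) where
  empty_mem := ⟨∅, ∅, by simp, by simp, (generateFrom _).measurableSet_empty⟩
  compl_mem := fun _ ⟨a, b, ha, hb, hs⟩ => ⟨a, b, ha, hb, hs.compl⟩
  union_mem := by
    rintro s t ⟨a, b, ha, hb, hs⟩ ⟨a', b', ha', hb', ht⟩
    refine ⟨a ∪ a', b ∪ b', fun u hu => (Finset.mem_union.1 hu).elim (ha u) (ha' u),
      fun u hu => (Finset.mem_union.1 hu).elim (hb u) (hb' u), .union ?_ ?_⟩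
    · refine generateFrom_mono ?_ _ hs
      simp only [Finset.coe_union]
      exact union_subset_union subset_union_left subset_union_left
    · refine generateFrom_mono ?_ _ ht
      simp only [Finset.coe_union]
      exact union_subset_union subset_union_right subset_union_right

lemma generateFrom_finGenSets (M N : MeasurableSpace Ω) :
    generateFrom (finGenSets M N) = M ⊔ N := by
  refine le_antisymm (generateFrom_le ?_) (sup_le (fun s hs => ?_) (fun s hs => ?_))
  · rintro s ⟨a, b, ha, hb, hs⟩
    refine generateFrom_le ?_ s hs
    rintro t (ht | ht)
    exacts [le_sup_left (a := M) _ (ha t ht), le_sup_right (a := M) _ (hb t ht)]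
  · exact measurableSet_generateFrom
      ⟨{s}, ∅, by simpa using hs, by simp, measurableSet_generateFrom (by simp)⟩
  · exact measurableSet_generateFrom
      ⟨∅, {s}, by simp, by simpa using hs, measurableSet_generateFrom (by simp)⟩

lemma exists_mem_finGenSets_measureReal_symmDiff_lt [IsFiniteMeasure μ]
    {M N : MeasurableSpace Ω} (hM : M ≤ m0) (hN : N ≤ m0) {s : Set Ω}
    (hs : MeasurableSet[M ⊔ N] s) {ε : ℝ} (hε : 0 < ε) :
    ∃ t ∈ finGenSets M N, μ.real (s ∆ t) < ε := by
  have hMN : M ⊔ N ≤ m0 := sup_le hM hN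
  have := isFiniteMeasure_trim (μ := μ) hMN
  have hdense := Measure.MeasureDense.of_generateFrom_isSetAlgebra_finite (m := M ⊔ N) (μ.trim hMN)
    (isSetAlgebra_finGenSets M N) (generateFrom_finGenSets M N).symm
  obtain ⟨t, ht, hst⟩ := hdense.approx (m := M ⊔ N) s hs (measure_ne_top _ _) ε hε
  rw [trim_measurableSet_eq hMN
    (@MeasurableSet.symmDiff _ (M ⊔ N) _ _ hs (hdense.measurable (m := M ⊔ N) t ht))] at hst
  exact ⟨t, ht, ENNReal.toReal_lt_of_lt_ofReal hst⟩

lemma exists_rectSignature_preimage_eq [Fintype ι] {M N : MeasurableSpace Ω} {T : ι → Set Ω}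
    (hT : ∀ k, T k ∈ finGenSets M N) :
    ∃ a b : Finset (Set Ω), (∀ t ∈ a, MeasurableSet[M] t) ∧ (∀ t ∈ b, MeasurableSet[N] t) ∧
      ∀ k, ∃ R : Set ((a → Bool) × (b → Bool)), rectSignature a b ⁻¹' R = T k := by
  choose a b ha hb hT using hT
  refine ⟨Finset.univ.biUnion a, Finset.univ.biUnion b, ?_, ?_, fun k => ?_⟩
  · intro t ht
    obtain ⟨k, -, hk⟩ := Finset.mem_biUnion.1 ht
    exact ha k t hk
  · intro t ht
    obtain ⟨k, -, hk⟩ := Finset.mem_biUnion.1 ht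
    exact hb k t hk
  · obtain ⟨R, -, hR⟩ := generateFrom_le_comap_rectSignature _ _ _ (generateFrom_mono
      (union_subset_union (Finset.coe_subset.2 (Finset.subset_biUnion_of_mem a (Finset.mem_univ k)))
        (Finset.coe_subset.2 (Finset.subset_biUnion_of_mem b (Finset.mem_univ k)))) _ (hT k))
    exact ⟨R, hR⟩

lemma exists_rectSignature_approx [IsFiniteMeasure μ] [Fintype ι] {M N : MeasurableSpace Ω}
    (hM : M ≤ m0) (hN : N ≤ m0) {C : ι → Set Ω} (hC : ∀ k, MeasurableSet[M ⊔ N] (C k))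
    (hCd : Pairwise (Disjoint on C)) {δ : ℝ} (hδ : 0 < δ) :
    ∃ (a b : Finset (Set Ω)) (S : ι → Finset ((a → Bool) × (b → Bool))),
      (∀ t ∈ a, MeasurableSet[M] t) ∧ (∀ t ∈ b, MeasurableSet[N] t) ∧
      Pairwise (Disjoint on S) ∧
      ∀ k, μ.real (C k ∆ (rectSignature a b ⁻¹' S k)) ≤ δ := by
  classical
  have hδ' : 0 < δ / (Fintype.card ι + 1) := by positivity
  choose T hT hCT using fun k =>
    exists_mem_finGenSets_measureReal_symmDiff_lt (μ := μ) hM hN (hC k) hδ'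
  obtain ⟨a, b, ha, hb, hR⟩ := exists_rectSignature_preimage_eq hT
  choose R hR using hR
  -- Disjointify the index sets rather than the sets `T k`, so that the result is still a family
  -- of unions of cells.
  obtain ⟨S, hSR, hSsup, hSd⟩ := Fintype.exists_disjointed_le fun k => (R k).toFinset
  refine ⟨a, b, S, ha, hb, hSd, fun k => ?_⟩
  have hsub : C k ∆ (rectSignature a b ⁻¹' S k) ⊆ ⋃ j, C j ∆ T j := by
    refine symmDiff_subset_iUnion_symmDiff (T := T)
      (U := fun j => rectSignature a b ⁻¹' S j) hCd (fun j => ?_)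
      (fun x hx => ?_) k
    · rw [← hR j]
      exact preimage_mono fun p hp => by simpa using hSR j hp
    · obtain ⟨j, hj⟩ := mem_iUnion.1 hx
      rw [← hR j] at hj
      have : rectSignature a b x ∈ Finset.univ.sup fun k => (R k).toFinset :=
        Finset.mem_sup.2 ⟨j, Finset.mem_univ _, by simpa using hj⟩
      obtain ⟨j', -, hj'⟩ := Finset.mem_sup.1 (hSsup ▸ this)
      exact mem_iUnion.2 ⟨j', hj'⟩
  calc μ.real (C k ∆ (rectSignature a b ⁻¹' S k))
      ≤ ∑ j, μ.real (C j ∆ T j) := (measureReal_mono hsub).trans (measureReal_iUnion_fintype_le _)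
    _ ≤ ∑ _j : ι, δ / (Fintype.card ι + 1) := Finset.sum_le_sum fun j _ => (hCT j).le
    _ ≤ δ := by
        rw [Finset.sum_const, Finset.card_univ, nsmul_eq_mul, ← mul_div_assoc,
          div_le_iff₀ (by positivity)]
        nlinarith

end approximation

section

variable [IsProbabilityMeasure μ] {F₁ F₂ G₁ G₂ : MeasurableSpace Ω} (hF₁ : F₁ ≤ m0)
  (hF₂ : F₂ ≤ m0) (hG₁ : G₁ ≤ m0) (hG₂ : G₂ ≤ m0) (hindep : Indep (F₁ ⊔ F₂) (G₁ ⊔ G₂) μ)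
include hF₁ hF₂ hG₁ hG₂ hindep

lemma betaSum_rectSignature_le_of_indep {a₁ b₁ a₂ b₂ : Finset (Set Ω)}
    (ha₁ : ∀ t ∈ a₁, MeasurableSet[F₁] t) (hb₁ : ∀ t ∈ b₁, MeasurableSet[G₁] t)
    (ha₂ : ∀ t ∈ a₂, MeasurableSet[F₂] t) (hb₂ : ∀ t ∈ b₂, MeasurableSet[G₂] t) :
    betaSum μ (fun p => rectSignature a₁ b₁ ⁻¹' {p}) (fun q => rectSignature a₂ b₂ ⁻¹' {q})
      ≤ 2 * @betaMix Ω m0 μ F₁ F₂ + 2 * @betaMix Ω m0 μ G₁ G₂ := by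
  have hA₁ := isMeasurablePartition_preimage_singleton (measurable_signature ha₁)
  have hB₁ := isMeasurablePartition_preimage_singleton (measurable_signature hb₁)
  have hA₂ := isMeasurablePartition_preimage_singleton (measurable_signature ha₂)
  have hB₂ := isMeasurablePartition_preimage_singleton (measurable_signature hb₂)
  simp only [rectSignature_preimage_singleton]
  refine (betaSum_inter_le_of_indep (sup_le hF₁ hF₂) (sup_le hG₁ hG₂) hindep
    (hA₁.mono le_sup_left) (hA₂.mono le_sup_right) (hB₁.mono le_sup_left)
    (hB₂.mono le_sup_right)).trans (add_le_add ?_ ?_)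
  · exact betaSum_le_two_mul_betaMix hF₁ hF₂ hA₁ hA₂
  · exact betaSum_le_two_mul_betaMix hG₁ hG₂ hB₁ hB₂

theorem betaSum_le_of_indep [Fintype ι] [Fintype κ] {C : ι → Set Ω} {D : κ → Set Ω}
    (hC : IsMeasurablePartition (F₁ ⊔ G₁) C) (hD : IsMeasurablePartition (F₂ ⊔ G₂) D) :
    betaSum μ C D ≤ 2 * @betaMix Ω m0 μ F₁ F₂ + 2 * @betaMix Ω m0 μ G₁ G₂ := by
  refine le_of_forall_pos_le_add fun ε hε => ?_
  set K : ℝ := 4 * Fintype.card ι * Fintype.card κ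
  have hδ : 0 < ε / (K + 1) := by positivity
  obtain ⟨a₁, b₁, S, ha₁, hb₁, hS, hCS⟩ := exists_rectSignature_approx (μ := μ) hF₁ hG₁
    hC.measurableSet hC.pairwise_disjoint hδ
  obtain ⟨a₂, b₂, T, ha₂, hb₂, hT, hDT⟩ := exists_rectSignature_approx (μ := μ) hF₂ hG₂
    hD.measurableSet hD.pairwise_disjoint hδ
  have hP₁ := measurable_rectSignature (fun t ht => hF₁ _ (ha₁ t ht)) fun t ht => hG₁ _ (hb₁ t ht)
  have hP₂ := measurable_rectSignature (fun t ht => hF₂ _ (ha₂ t ht)) fun t ht => hG₂ _ (hb₂ t ht)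
  calc betaSum μ C D
      ≤ betaSum μ (fun k => rectSignature a₁ b₁ ⁻¹' S k)
          (fun l => rectSignature a₂ b₂ ⁻¹' T l) + K * (ε / (K + 1)) :=
        betaSum_le_add_of_symmDiff_le (fun k => (hC.mono (sup_le hF₁ hG₁)).measurableSet k)
          (fun l => (hD.mono (sup_le hF₂ hG₂)).measurableSet l)
          (fun k => hP₁ (S k).measurableSet) (fun l => hP₂ (T l).measurableSet) hCS hDT
    _ ≤ betaSum μ (fun p => rectSignature a₁ b₁ ⁻¹' {p})
          (fun q => rectSignature a₂ b₂ ⁻¹' {q}) + K * (ε / (K + 1)) := by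
        gcongr
        exact betaSum_preimage_le hP₁ hP₂ hS hT
    _ ≤ (2 * @betaMix Ω m0 μ F₁ F₂ + 2 * @betaMix Ω m0 μ G₁ G₂) + ε := by
        gcongr ?_ + ?_
        · exact betaSum_rectSignature_le_of_indep hF₁ hF₂ hG₁ hG₂ hindep ha₁ hb₁ ha₂ hb₂
        · rw [← mul_div_assoc, div_le_iff₀ (by positivity)]
          linarith

end

end BetaMixing

/-- Subadditivity of the β-mixing coefficient under independent joins:
if `σ(F₁,F₂)` is independent of `σ(G₁,G₂)`, then
`β(σ(F₁,G₁), σ(F₂,G₂)) ≤ β(F₁,F₂) + β(G₁,G₂)`. -/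
theorem betaMix_join_le {Ω : Type*} {m0 : MeasurableSpace Ω}
    (μ : Measure Ω) (hprob : IsProbabilityMeasure μ)
    (F₁ F₂ G₁ G₂ : MeasurableSpace Ω)
    (hF₁ : F₁ ≤ m0) (hF₂ : F₂ ≤ m0) (hG₁ : G₁ ≤ m0) (hG₂ : G₂ ≤ m0)
    (hindep : @ProbabilityTheory.Indep Ω (F₁ ⊔ F₂) (G₁ ⊔ G₂) m0 μ) :
    @betaMix Ω m0 μ (F₁ ⊔ G₁) (F₂ ⊔ G₂) ≤
      @betaMix Ω m0 μ F₁ F₂ + @betaMix Ω m0 μ G₁ G₂ :=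
  BetaMixing.betaMix_le fun _ _ _ _ hC hD =>
    (BetaMixing.betaSum_le_of_indep hF₁ hF₂ hG₁ hG₂ hindep hC hD).trans_eq (mul_add 2 _ _).symm
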